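/- arXiv:1311.2527 — 2 statements merged into one kernel-verified Lean document; each statement's English description precedes it below -/
import Mathlib

section
/- Assuming the Brun–Titchmarsh inequality π(x; m, 1) ≤ 2x/(φ(m) log(x/m)) for m < x, the quantity M₁ = Σ log ℓ over prime powers ℓ^k with k ≥ 2 and x^c < ℓ^k ≤ x^{1-d}(log x)^r, weighted by π(x; ℓ^k, 1), satisfies M₁ ≪ x^{1-c+(1-d)/2}/(log x)^{1 - r/2}, for fixed 0 < c ≤ 1/2, 0 < d < 1 - c, r ∈ [0,1). -/
/-!
Brun–Titchmarsh applies to `m = ℓ^k ≤ x^(1-d/2)` (the factor `(log x)^r` is absorbed by `x^(d/2)`),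
and with `φ(ℓ^k) ≥ ℓ^k/2` it gives `log ℓ · π(x; ℓ^k, 1) ≪ x / ℓ^k`. Since `k ≥ 2` and
`ℓ^k > x^c`, we have `ℓ^k ≥ x^(c/2) ℓ`, so every term is `≪ x^(1-c/2) / ℓ`. Summing over the
`O(log x)` exponents and over `ℓ ≤ x` (a harmonic sum) gives `≪ x^(1-c/2) (log x)^2`; the claimed
bound exceeds `x^(1-c/2)` by the factor `x^((1-c-d)/2) / (log x)^(1-r/2)`, and a positive power
of `x` beats every power of `log x`.
-/

open scoped Classical

/-- `π(x; m, 1)`: the number of primes `q ≤ x` with `q ≡ 1 (mod m)`. -/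
noncomputable def piProg (x : ℝ) (m : ℕ) : ℕ :=
  ((Finset.Icc 1 ⌊x⌋₊).filter (fun q => q.Prime ∧ q % m = 1)).card

open Finset Real Filter

def BrunTitchmarsh (x : ℝ) : Prop :=
  ∀ m : ℕ, 1 ≤ m → (m : ℝ) < x →
    (piProg x m : ℝ) ≤ 2 * x / ((m.totient : ℝ) * Real.log (x / m))

lemma eventually_log_rpow_le_rpow (a : ℝ) {b : ℝ} (hb : 0 < b) :
    ∀ᶠ x : ℝ in atTop, log x ^ a ≤ x ^ b := by
  filter_upwards [(isLittleO_log_rpow_rpow_atTop a hb).bound one_pos,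
    eventually_ge_atTop 1] with x hx hx1
  rw [one_mul, norm_of_nonneg (rpow_nonneg (log_nonneg hx1) a),
    norm_of_nonneg (rpow_nonneg (by linarith) b)] at hx
  exact hx

lemma Nat.half_le_totient_prime_pow {p k : ℕ} (hp : p.Prime) (hk : 0 < k) :
    (p : ℝ) ^ k / 2 ≤ (p ^ k).totient := by
  obtain ⟨k, rfl⟩ := Nat.exists_eq_add_of_le' hk
  have hp2 : (2 : ℝ) ≤ p := by exact_mod_cast hp.two_le
  rw [Nat.totient_prime_pow_succ hp, Nat.cast_mul, Nat.cast_sub hp.one_le, pow_succ]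
  push_cast
  nlinarith [pow_nonneg (by linarith : (0:ℝ) ≤ p) k]

lemma mul_le_pow_of_sq_le {y ℓ : ℝ} {j : ℕ} (hy : 0 ≤ y) (hℓ : 1 ≤ ℓ) (hj : 2 ≤ j)
    (h : y ^ 2 ≤ ℓ ^ j) : y * ℓ ≤ ℓ ^ j := by
  have hℓj : ℓ ^ 2 ≤ ℓ ^ j := pow_le_pow_right₀ hℓ hj
  refine (pow_le_pow_iff_left₀ (by positivity) (by positivity) two_ne_zero).mp ?_
  calc (y * ℓ) ^ 2 = y ^ 2 * ℓ ^ 2 := mul_pow y ℓ 2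
    _ ≤ ℓ ^ j * ℓ ^ j := mul_le_mul h hℓj (by positivity) (by positivity)
    _ = (ℓ ^ j) ^ 2 := (sq _).symm

lemma piProg_le_of_le_rpow {x δ : ℝ} {m : ℕ} (hx : 1 < x) (hδ : 0 < δ)
    (hBT : BrunTitchmarsh x) (hm : 1 ≤ m) (hmx : (m : ℝ) ≤ x ^ (1 - δ)) :
    (piProg x m : ℝ) ≤ 2 * x / ((m.totient : ℝ) * (δ * log x)) := by
  have hx0 : 0 < x := by linarith
  have hm0 : (0 : ℝ) < m := by exact_mod_cast hm
  have hφ : (0 : ℝ) < m.totient := by exact_mod_cast Nat.totient_pos.mpr hm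
  have hxδ : x ^ δ ≤ x / m := by
    rw [le_div_iff₀ hm0]
    calc x ^ δ * m ≤ x ^ δ * x ^ (1 - δ) := by gcongr
      _ = x := by rw [← rpow_add hx0, add_sub_cancel, rpow_one]
  have hlog : δ * log x ≤ log (x / m) := by
    rw [← log_rpow hx0]
    exact log_le_log (by positivity) hxδ
  refine (hBT m hm (hmx.trans_lt ?_)).trans ?_
  · simpa using rpow_lt_rpow_of_exponent_lt hx (by linarith : 1 - δ < 1)
  · have := log_pos hx
    gcongr

lemma log_mul_piProg_prime_pow_le {x c δ : ℝ} {ℓ j : ℕ} (hx : 1 < x) (hδ : 0 < δ)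
    (hBT : BrunTitchmarsh x) (hℓ : ℓ.Prime) (hℓx : (ℓ : ℝ) ≤ x) (hj : 2 ≤ j)
    (hlow : x ^ c < (ℓ : ℝ) ^ j) (hhigh : (ℓ : ℝ) ^ j ≤ x ^ (1 - δ)) :
    log ℓ * piProg x (ℓ ^ j) ≤ 4 / δ * x ^ (1 - c / 2) / ℓ := by
  have hx0 : 0 < x := by linarith
  have hlogx : 0 < log x := log_pos hx
  have hℓ1 : (1 : ℝ) ≤ ℓ := by exact_mod_cast hℓ.one_le
  have hℓj : (0 : ℝ) < ℓ ^ j := by positivity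
  have hπ : (piProg x (ℓ ^ j) : ℝ) ≤ 2 * x / ((ℓ : ℝ) ^ j / 2 * (δ * log x)) := by
    refine (piProg_le_of_le_rpow hx hδ hBT (Nat.one_le_pow _ _ hℓ.pos) (by simpa)).trans ?_
    gcongr
    exact Nat.half_le_totient_prime_pow hℓ (by omega)
  have hsq : x ^ (c / 2) * ℓ ≤ (ℓ : ℝ) ^ j := by
    refine mul_le_pow_of_sq_le (by positivity) hℓ1 hj ?_
    rw [← rpow_natCast, ← rpow_mul hx0.le]
    simpa using hlow.le
  calc log ℓ * piProg x (ℓ ^ j) ≤ log x * (2 * x / ((ℓ : ℝ) ^ j / 2 * (δ * log x))) := by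
        gcongr
    _ = 4 / δ * x / (ℓ : ℝ) ^ j := by field_simp; ring
    _ ≤ 4 / δ * x / (x ^ (c / 2) * ℓ) := by gcongr
    _ = 4 / δ * x ^ (1 - c / 2) / ℓ := by
        rw [rpow_sub hx0, rpow_one]; field_simp

lemma sum_one_div_le_one_add_log {s : Finset ℕ} {x : ℝ} (hx : 1 ≤ x)
    (hs : s ⊆ Icc 1 ⌊x⌋₊) : ∑ n ∈ s, 1 / (n : ℝ) ≤ 1 + log x := by
  have hfloor : (1 : ℝ) ≤ ⌊x⌋₊ := by exact_mod_cast Nat.one_le_floor_iff _ |>.mpr hx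
  calc ∑ n ∈ s, 1 / (n : ℝ) ≤ ∑ n ∈ Icc 1 ⌊x⌋₊, 1 / (n : ℝ) :=
        sum_le_sum_of_subset_of_nonneg hs fun _ _ _ => by positivity
    _ = harmonic ⌊x⌋₊ := by simp [harmonic_eq_sum_Icc]
    _ ≤ 1 + log ⌊x⌋₊ := harmonic_le_one_add_log _
    _ ≤ 1 + log x := by gcongr; exact Nat.floor_le (by linarith)

lemma sum_sum_Icc_two_le {s : Finset ℕ} {x K : ℝ} {J : ℕ} (f : ℕ → ℕ → ℝ) (hx : 1 ≤ x)
    (hs : s ⊆ Icc 1 ⌊x⌋₊) (hK : 0 ≤ K) (hf : ∀ ℓ ∈ s, ∀ j ∈ Icc 2 J, f ℓ j ≤ K / ℓ) :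
    ∑ ℓ ∈ s, ∑ j ∈ Icc 2 J, f ℓ j ≤ J * K * (1 + log x) := by
  calc ∑ ℓ ∈ s, ∑ j ∈ Icc 2 J, f ℓ j ≤ ∑ ℓ ∈ s, ∑ _j ∈ Icc 2 J, K / ℓ :=
        sum_le_sum fun ℓ hℓ => sum_le_sum (hf ℓ hℓ)
    _ ≤ ∑ ℓ ∈ s, J * (K * (1 / ℓ)) := by
        refine sum_le_sum fun ℓ _ => ?_
        rw [sum_const, Nat.card_Icc, nsmul_eq_mul, mul_one_div]
        gcongr
        exact_mod_cast (by omega : J + 1 - 2 ≤ J)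
    _ = J * K * ∑ ℓ ∈ s, 1 / (ℓ : ℝ) := by rw [mul_assoc, mul_sum, mul_sum]
    _ ≤ J * K * (1 + log x) := by gcongr; exact sum_one_div_le_one_add_log hx hs

lemma natCeil_two_mul_logb_two_le {x : ℝ} (hx : 1 ≤ log x) :
    (⌈2 * logb 2 x⌉₊ : ℝ) ≤ 4 * log x := by
  have hlog2 : 2 / 3 < log 2 := by linarith [log_two_gt_d9]
  have hlogb : 2 * logb 2 x ≤ 3 * log x := by
    rw [logb, mul_div_assoc', div_le_iff₀ (by linarith)]
    nlinarith
  have hlogb0 : 0 ≤ logb 2 x := div_nonneg (by linarith) (by linarith)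
  linarith [Nat.ceil_lt_add_one (by positivity : 0 ≤ 2 * logb 2 x)]

lemma rpow_mul_log_sq_le_div {x a b e : ℝ} (hx : 1 < x) (h : log x ^ (2 + e) ≤ x ^ b) :
    x ^ a * log x ^ 2 ≤ x ^ (a + b) / log x ^ e := by
  have hx0 : 0 < x := by linarith
  have hlog : 0 < log x := log_pos hx
  rw [le_div_iff₀ (by positivity), rpow_add hx0, mul_assoc, ← rpow_natCast, ← rpow_add hlog]
  push_cast
  gcongr

theorem stmt15_general (c d r : ℝ) (hd0 : 0 < d) (hd : d < 1 - c) :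
    ∃ C > 0, ∃ x₀ : ℝ, ∀ x : ℝ, x₀ ≤ x →
      (∀ m : ℕ, 1 ≤ m → (m : ℝ) < x →
          (piProg x m : ℝ) ≤ 2 * x / ((m.totient : ℝ) * Real.log (x / m))) →
      (∑ ℓ ∈ (Finset.Icc 1 ⌊x⌋₊).filter Nat.Prime,
          ∑ j ∈ Finset.Icc 2 ⌈2 * Real.logb 2 x⌉₊,
            if x ^ c < ((ℓ : ℝ)) ^ j ∧ ((ℓ : ℝ)) ^ j ≤ x ^ (1 - d) * (Real.log x) ^ r
            then Real.log ℓ * (piProg x (ℓ ^ j) : ℝ) else 0)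
        ≤ C * x ^ (1 - c + (1 - d) / 2) / (Real.log x) ^ (1 - r / 2) := by
  obtain ⟨x₀, hx₀⟩ := eventually_atTop.mp <| (eventually_gt_atTop 1).and <|
    (tendsto_log_atTop.eventually_ge_atTop 1).and <|
      (eventually_log_rpow_le_rpow r (half_pos hd0)).and <|
        eventually_log_rpow_le_rpow (2 + (1 - r / 2)) (by linarith : 0 < (1 - c - d) / 2)
  refine ⟨64 / d, by positivity, x₀, fun x hx hBT => ?_⟩
  obtain ⟨hx1, hlog, hlogr, hlog3⟩ := hx₀ x hx
  set K := 8 / d * x ^ (1 - c / 2)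
  have hterm : ∀ ℓ ∈ (Icc 1 ⌊x⌋₊).filter Nat.Prime, ∀ j ∈ Icc 2 ⌈2 * logb 2 x⌉₊,
      (if x ^ c < (ℓ : ℝ) ^ j ∧ (ℓ : ℝ) ^ j ≤ x ^ (1 - d) * log x ^ r
        then log ℓ * (piProg x (ℓ ^ j) : ℝ) else 0) ≤ K / ℓ := by
    intro ℓ hℓ j hj
    rw [mem_filter, mem_Icc] at hℓ
    split_ifs with h
    · have hhigh : (ℓ : ℝ) ^ j ≤ x ^ (1 - d / 2) := h.2.trans <| by
        rw [show 1 - d / 2 = 1 - d + d / 2 by ring, rpow_add (by linarith)]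
        gcongr
      convert log_mul_piProg_prime_pow_le hx1 (half_pos hd0) hBT hℓ.2
        ((Nat.cast_le.2 hℓ.1.2).trans (Nat.floor_le (by linarith))) (mem_Icc.1 hj).1 h.1 hhigh
        using 2
      ring
    · positivity
  calc _ ≤ ⌈2 * logb 2 x⌉₊ * K * (1 + log x) :=
        sum_sum_Icc_two_le _ hx1.le (filter_subset _ _) (by positivity) hterm
    _ ≤ 4 * log x * K * (2 * log x) := by
        gcongr
        · exact natCeil_two_mul_logb_two_le hlog
        · linarith
    _ = 64 / d * (x ^ (1 - c / 2) * log x ^ 2) := by ring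
    _ ≤ 64 / d * (x ^ (1 - c / 2 + (1 - c - d) / 2) / log x ^ (1 - r / 2)) := by
        gcongr
        exact rpow_mul_log_sq_le_div hx1 hlog3
    _ = 64 / d * x ^ (1 - c + (1 - d) / 2) / log x ^ (1 - r / 2) := by
        rw [mul_div_assoc]; congr 3; ring

theorem stmt15 (c d r : ℝ) (hc0 : 0 < c) (hc : c ≤ 1 / 2) (hd0 : 0 < d)
    (hd : d < 1 - c) (hr0 : 0 ≤ r) (hr1 : r < 1) :
    ∃ C > 0, ∃ x₀ : ℝ, ∀ x : ℝ, x₀ ≤ x →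
      (∀ m : ℕ, 1 ≤ m → (m : ℝ) < x →
          (piProg x m : ℝ) ≤ 2 * x / ((m.totient : ℝ) * Real.log (x / m))) →
      (∑ ℓ ∈ (Finset.Icc 1 ⌊x⌋₊).filter Nat.Prime,
          ∑ j ∈ Finset.Icc 2 ⌈2 * Real.logb 2 x⌉₊,
            if x ^ c < ((ℓ : ℝ)) ^ j ∧ ((ℓ : ℝ)) ^ j ≤ x ^ (1 - d) * (Real.log x) ^ r
            then Real.log ℓ * (piProg x (ℓ ^ j) : ℝ) else 0)
        ≤ C * x ^ (1 - c + (1 - d) / 2) / (Real.log x) ^ (1 - r / 2) :=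
  stmt15_general c d r hd0 hd
end

section
/- Let k ≥ 2, a ∈ [1/(2k), 17/(32k)), and suppose there are at least y^{ak}/log y primes p in the interval [y^{ak}, 2y^{ak}] (with y = x^{1/k}) such that π(y; p, 1) > C·y/(p log y) for a fixed constant C > 0. Then #A_{k,a}(x) ≫ x^{1−a(k−1)}/(log x)^{k+1}. -/
open scoped Classical

/-- Largest prime factor of `n` (junk value `0` for `n = 0, 1`). -/
noncomputable def largestPrimeFactor (n : ℕ) : ℕ := n.primeFactors.sup id

/-- `n ∈ A_{k,a}`: `n` is a product of `k` distinct primes `p₁, …, p_k` and the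
largest prime factor of `gcd(p₁ - 1, …, p_k - 1)` exceeds `n ^ a`. -/
def memA (k : ℕ) (a : ℝ) (n : ℕ) : Prop :=
  ∃ f : Fin k → ℕ, Function.Injective f ∧ (∀ i, (f i).Prime) ∧
    n = ∏ i, f i ∧
    (n : ℝ) ^ a < ((largestPrimeFactor (Finset.univ.gcd fun i => f i - 1) : ℕ) : ℝ)

def Qfun (B : ℕ) (p : ℕ) : Finset ℕ :=
  (Finset.Icc 1 B).filter (fun q : ℕ => q.Prime ∧ q % p = 1)

lemma Qfun_facts {B p q : ℕ} (hq : q ∈ Qfun B p) :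
    q.Prime ∧ q ≤ B ∧ p ∣ q - 1 ∧ 2 ≤ q := by
  rw [Qfun, Finset.mem_filter, Finset.mem_Icc] at hq
  obtain ⟨⟨hq1, hqB⟩, hqP, hqmod⟩ := hq
  have hq2 := hqP.two_le
  have hdm : p * (q / p) + q % p = q := Nat.div_add_mod q p
  exact ⟨hqP, hqB, ⟨q / p, by omega⟩, hq2⟩

lemma aux_prod_inj {S S' : Finset ℕ} (hS : ∀ q ∈ S, q.Prime) (hS' : ∀ q ∈ S', q.Prime)
    (h : ∏ q ∈ S, q = ∏ q ∈ S', q) : S = S' := by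
  have h1 := Nat.primeFactors_prod hS
  have h2 := Nat.primeFactors_prod hS'
  rw [← h1, ← h2, h]

lemma aux_memA (k : ℕ) (hk : 2 ≤ k) (a : ℝ) {p : ℕ} (hp : p.Prime) (S : Finset ℕ)
    (hcard : S.card = k) (hprime : ∀ q ∈ S, q.Prime) (hdvd : ∀ q ∈ S, p ∣ q - 1)
    (hlt : ((∏ q ∈ S, q : ℕ) : ℝ) ^ a < (p : ℝ)) : memA k a (∏ q ∈ S, q) := by
  classical
  have e : S ≃ Fin k := S.equivFinOfCardEq hcard
  set f : Fin k → ℕ := fun i => ((e.symm i : S) : ℕ) with hf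
  have hfmem : ∀ i, f i ∈ S := fun i => (e.symm i).2
  have hfinj : Function.Injective f := fun i j hij => by
    have : e.symm i = e.symm j := Subtype.ext hij
    exact e.symm.injective this
  have hfprime : ∀ i, (f i).Prime := fun i => hprime _ (hfmem i)
  have hprod : ∏ i, f i = ∏ q ∈ S, q := by
    rw [← Finset.prod_attach S (fun q => q)]
    exact Equiv.prod_comp e.symm (fun s : S => (s : ℕ))
  set g := Finset.univ.gcd fun i => f i - 1 with hg
  have hpg : p ∣ g := Finset.dvd_gcd fun i _ => hdvd _ (hfmem i)
  have hg0 : g ≠ 0 := by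
    intro h0
    rw [Finset.gcd_eq_zero_iff] at h0
    have i0 : Fin k := ⟨0, by omega⟩
    have h1 := h0 i0 (Finset.mem_univ _)
    have h2 := (hfprime i0).two_le
    omega
  have hple : p ≤ largestPrimeFactor g := by
    have : p ∈ g.primeFactors := Nat.mem_primeFactors.mpr ⟨hp, hpg, hg0⟩
    exact Finset.le_sup (f := id) this
  exact ⟨f, hfinj, hfprime, hprod.symm, lt_of_lt_of_le hlt (by exact_mod_cast hple)⟩

set_option maxHeartbeats 2000000 in
theorem stmt18 (k : ℕ) (hk : 2 ≤ k) (a : ℝ) (ha : 1 / (2 * (k : ℝ)) ≤ a)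
    (ha' : a < 17 / (32 * (k : ℝ))) (C : ℝ) (hC : 0 < C) :
    ∃ c > 0, ∃ x₀ : ℝ, ∀ x : ℝ, x₀ ≤ x →
      (let y : ℝ := x ^ (1 / (k : ℝ));
        y ^ (a * k) / Real.log y ≤
          (((Finset.Icc 1 ⌊2 * y ^ (a * k)⌋₊).filter (fun p : ℕ =>
              p.Prime ∧ y ^ (a * k) ≤ (p : ℝ) ∧
                C * y / ((p : ℝ) * Real.log y) <
                  (((Finset.Icc 1 ⌊y⌋₊).filter
                    (fun q : ℕ => q.Prime ∧ q % p = 1)).card : ℝ))).card : ℝ)) →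
      c * x ^ (1 - a * ((k : ℝ) - 1)) / (Real.log x) ^ (k + 1)
        ≤ (((Finset.Icc 1 ⌊x⌋₊).filter (memA k a)).card : ℝ) := by
  classical
  have hk0 : (0:ℝ) < k := by
    have : 0 < k := by omega
    exact_mod_cast this
  have ha0 : 0 < a := lt_of_lt_of_le (by positivity) ha
  have hak2 : 1 / 2 ≤ a * k := by
    have := mul_le_mul_of_nonneg_right ha (le_of_lt hk0)
    calc (1:ℝ)/2 = 1 / (2 * (k:ℝ)) * k := by field_simp
    _ ≤ a * k := this
  have hak17 : a * k < 17 / 32 := by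
    have := mul_lt_mul_of_pos_right ha' hk0
    calc a * k < 17 / (32 * (k:ℝ)) * k := this
    _ = 17 / 32 := by field_simp
  have hb : 0 < 1 - a * k := by linarith
  -- the constant
  set c : ℝ := (C / 4) ^ k * (k : ℝ) ^ (k + 1) / (Nat.factorial k) with hcdef
  have hc : 0 < c := by
    have : (0:ℝ) < Nat.factorial k := by exact_mod_cast Nat.factorial_pos k
    positivity
  refine ⟨c, hc, ?_⟩
  -- eventual conditions
  have hevy : ∀ᶠ y in Filter.atTop, (1:ℝ) < y ∧ Real.log y ≤ C / (4 * k) * y ^ (1 - a * k) := by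
    have h2 := (isLittleO_log_rpow_atTop hb).def (show (0:ℝ) < C / (4 * k) by positivity)
    filter_upwards [h2, Filter.eventually_gt_atTop (1:ℝ)] with y hy2 hy1
    refine ⟨hy1, ?_⟩
    rw [Real.norm_eq_abs, Real.norm_eq_abs,
      abs_of_nonneg (Real.rpow_nonneg (by linarith) (1 - a * k))] at hy2
    exact (le_abs_self _).trans hy2
  have hevx : ∀ᶠ x in Filter.atTop, (1:ℝ) < x ∧
      ((1:ℝ) < x ^ (1 / (k:ℝ)) ∧
        Real.log (x ^ (1 / (k:ℝ))) ≤ C / (4 * k) * (x ^ (1 / (k:ℝ))) ^ (1 - a * k)) := by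
    have ht : Filter.Tendsto (fun x : ℝ => x ^ (1 / (k:ℝ))) Filter.atTop Filter.atTop :=
      tendsto_rpow_atTop (by positivity)
    exact (Filter.eventually_gt_atTop 1).and (ht.eventually hevy)
  obtain ⟨x₀, hx₀⟩ := Filter.eventually_atTop.mp hevx
  refine ⟨x₀, ?_⟩
  intro x hx hyp
  obtain ⟨hx1, hy1, hlogyE⟩ := hx₀ x hx
  simp only [] at hyp
  set y : ℝ := x ^ (1 / (k:ℝ)) with hydef
  have hx0 : (0:ℝ) < x := lt_trans one_pos hx1
  have hy0 : (0:ℝ) < y := lt_trans one_pos hy1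
  have hlogy : 0 < Real.log y := Real.log_pos hy1
  set T : ℝ := y ^ (a * k) with hTdef
  have hT0 : 0 < T := Real.rpow_pos_of_pos hy0 _
  have hTxa : T = x ^ a := by
    rw [hTdef, hydef, ← Real.rpow_mul hx0.le]
    congr 1
    field_simp
  have hyk : y ^ (k:ℕ) = x := by
    rw [hydef, ← Real.rpow_natCast (x ^ (1/(k:ℝ))) k, ← Real.rpow_mul hx0.le]
    rw [one_div_mul_cancel (ne_of_gt hk0), Real.rpow_one]
  have hlogyx : Real.log y = Real.log x / k := by
    rw [hydef, Real.log_rpow hx0]; ring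
  have hlogx : 0 < Real.log x := Real.log_pos hx1
  -- the lower bound on M
  set M : ℝ := C * y / (2 * T * Real.log y) with hMdef
  have hyT : y ^ (1 - a * k) = y / T := by
    rw [Real.rpow_sub hy0, Real.rpow_one, hTdef]
  have hM2k : 2 * (k:ℝ) ≤ M := by
    rw [hMdef, le_div_iff₀ (by positivity)]
    rw [hyT] at hlogyE
    have h1 : Real.log y * (4 * (k:ℝ) * T) ≤ (C / (4 * k) * (y / T)) * (4 * k * T) :=
      mul_le_mul_of_nonneg_right hlogyE (by positivity)
    have h2 : (C / (4 * (k:ℝ)) * (y / T)) * (4 * k * T) = C * y := by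
      field_simp
    nlinarith [h1, h2]
  -- the main counting sets
  have hypF : T / Real.log y ≤
      (((Finset.Icc 1 ⌊2 * T⌋₊).filter (fun p : ℕ =>
        p.Prime ∧ T ≤ (p : ℝ) ∧ C * y / ((p : ℝ) * Real.log y) <
          ((Qfun ⌊y⌋₊ p).card : ℝ))).card : ℝ) := hyp
  set F : Finset ℕ := (Finset.Icc 1 ⌊2 * T⌋₊).filter (fun p : ℕ =>
    p.Prime ∧ T ≤ (p : ℝ) ∧ C * y / ((p : ℝ) * Real.log y) <
      ((Qfun ⌊y⌋₊ p).card : ℝ)) with hFdef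
  set A : Finset ℕ := (Finset.Icc 1 ⌊x⌋₊).filter (memA k a) with hAdef
  set G : ℕ → Finset ℕ := fun p => ((Qfun ⌊y⌋₊ p).powersetCard k).image
    (fun S => ∏ q ∈ S, q) with hGdef
  -- facts about members of F
  have hFmem : ∀ p ∈ F, p.Prime ∧ T ≤ (p:ℝ) ∧ (p:ℝ) ≤ 2 * T ∧
      M < ((Qfun ⌊y⌋₊ p).card : ℝ) := by
    intro p hp
    rw [hFdef, Finset.mem_filter] at hp
    obtain ⟨hpI, hpP, hpT, hpQ⟩ := hp
    have hp2T : (p:ℝ) ≤ 2 * T := by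
      have h1 := (Finset.mem_Icc.mp hpI).2
      have h2 : ((⌊2 * T⌋₊ : ℕ) : ℝ) ≤ 2 * T := Nat.floor_le (by positivity)
      exact le_trans (by exact_mod_cast h1) h2
    have hp0 : (0:ℝ) < p := by exact_mod_cast hpP.pos
    have hMle : M ≤ C * y / ((p:ℝ) * Real.log y) := by
      rw [hMdef]
      exact div_le_div_of_nonneg_left (by positivity) (by positivity)
        (mul_le_mul_of_nonneg_right hp2T hlogy.le)
    exact ⟨hpP, hpT, hp2T, lt_of_le_of_lt hMle hpQ⟩
  -- G p ⊆ A
  have hGsub : ∀ p ∈ F, G p ⊆ A := by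
    intro p hpF n hn
    obtain ⟨hpP, hpT, hp2T, hMQ⟩ := hFmem p hpF
    rw [hGdef] at hn
    simp only [Finset.mem_image] at hn
    obtain ⟨S, hS, rfl⟩ := hn
    rw [Finset.mem_powersetCard] at hS
    obtain ⟨hSsub, hSk⟩ := hS
    have hSfacts : ∀ q ∈ S, q.Prime ∧ q ≤ ⌊y⌋₊ ∧ p ∣ q - 1 ∧ 2 ≤ q :=
      fun q hq => Qfun_facts (hSsub hq)
    have hSprime : ∀ q ∈ S, q.Prime := fun q hq => (hSfacts q hq).1
    have hSdvd : ∀ q ∈ S, p ∣ q - 1 := fun q hq => (hSfacts q hq).2.2.1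
    -- n < x
    have hcard1 : 1 < S.card := by omega
    obtain ⟨q1, hq1, q2, hq2, hne⟩ := Finset.one_lt_card.mp hcard1
    have hexists : ∃ qm ∈ S, qm + 1 ≤ ⌊y⌋₊ := by
      rcases hne.lt_or_gt with h | h
      · exact ⟨q1, hq1, by have := (hSfacts q2 hq2).2.1; omega⟩
      · exact ⟨q2, hq2, by have := (hSfacts q1 hq1).2.1; omega⟩
    obtain ⟨qm, hqmS, hqmB⟩ := hexists
    have hprodN : ∏ q ∈ S, q < ⌊y⌋₊ ^ k := by
      have he1 : qm * ∏ q ∈ S.erase qm, q = ∏ q ∈ S, q :=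
        Finset.mul_prod_erase S (fun q => q) hqmS
      have he2 : ∏ q ∈ S.erase qm, q ≤ ⌊y⌋₊ ^ (S.erase qm).card :=
        Finset.prod_le_pow_card _ _ _
          (fun q hq => (hSfacts q (Finset.mem_of_mem_erase hq)).2.1)
      have he3 : (S.erase qm).card = k - 1 := by
        rw [Finset.card_erase_of_mem hqmS, hSk]
      have hpos : 0 < ⌊y⌋₊ ^ (k - 1) := pow_pos (by omega) _
      have hkk : k - 1 + 1 = k := by omega
      calc ∏ q ∈ S, q = qm * ∏ q ∈ S.erase qm, q := he1.symm
        _ ≤ qm * ⌊y⌋₊ ^ (k - 1) := by rw [← he3]; exact Nat.mul_le_mul_left _ he2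
        _ < ⌊y⌋₊ * ⌊y⌋₊ ^ (k - 1) := by
            exact mul_lt_mul_of_pos_right (by omega) hpos
        _ = ⌊y⌋₊ ^ k := by conv_rhs => rw [← hkk, pow_succ, mul_comm]
    have hnx : ((∏ q ∈ S, q : ℕ) : ℝ) < x := by
      have h1 : ((∏ q ∈ S, q : ℕ) : ℝ) < ((⌊y⌋₊ : ℕ) : ℝ) ^ k := by
        exact_mod_cast hprodN
      have h3 : ((⌊y⌋₊ : ℕ) : ℝ) ≤ y := Nat.floor_le hy0.le
      have h4 : ((⌊y⌋₊ : ℕ) : ℝ) ^ k ≤ y ^ k := pow_le_pow_left₀ (by positivity) h3 k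
      rw [← hyk]; linarith
    have hn1 : 1 ≤ ∏ q ∈ S, q := Nat.one_le_iff_ne_zero.mpr (by
      rw [Finset.prod_ne_zero_iff]
      intro q hq
      exact (hSprime q hq).pos.ne')
    have hnfloor : ∏ q ∈ S, q ≤ ⌊x⌋₊ := Nat.le_floor hnx.le
    have hmem : memA k a (∏ q ∈ S, q) := by
      apply aux_memA k hk a hpP S hSk hSprime hSdvd
      calc ((∏ q ∈ S, q : ℕ) : ℝ) ^ a < x ^ a :=
            Real.rpow_lt_rpow (by positivity) hnx ha0
        _ = T := hTxa.symm
        _ ≤ p := hpT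
    rw [hAdef, Finset.mem_filter, Finset.mem_Icc]
    exact ⟨⟨hn1, hnfloor⟩, hmem⟩
  -- disjointness
  have hdisj : ∀ p ∈ F, ∀ p' ∈ F, p ≠ p' → Disjoint (G p) (G p') := by
    intro p hp p' hp' hne
    rw [Finset.disjoint_left]
    intro n hn hn'
    rw [hGdef] at hn hn'
    simp only [Finset.mem_image] at hn hn'
    obtain ⟨S, hS, hSn⟩ := hn
    obtain ⟨S', hS', hS'n⟩ := hn'
    rw [Finset.mem_powersetCard] at hS hS'
    have hSS' : S = S' := aux_prod_inj
      (fun q hq => (Qfun_facts (hS.1 hq)).1)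
      (fun q hq => (Qfun_facts (hS'.1 hq)).1)
      (hSn.trans hS'n.symm)
    have hSne : S.Nonempty := by
      rw [← Finset.card_pos, hS.2]; omega
    obtain ⟨q, hq⟩ := hSne
    have h1 := Qfun_facts (hS.1 hq)
    have h2 := Qfun_facts (hS'.1 (hSS' ▸ hq))
    have hpP := (hFmem p hp).1
    have hp'P := (hFmem p' hp').1
    have hcop : Nat.Coprime p p' := (Nat.coprime_primes hpP hp'P).mpr hne
    have hdv : p * p' ∣ q - 1 := hcop.mul_dvd_of_dvd_of_dvd h1.2.2.1 h2.2.2.1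
    have hle : p * p' ≤ q - 1 := Nat.le_of_dvd (by have := h1.2.2.2; omega) hdv
    have hppT : y ≤ (p:ℝ) * (p':ℝ) := by
      have hTT : y ≤ T * T := by
        rw [hTdef, ← Real.rpow_add hy0]
        calc y = y ^ (1:ℝ) := (Real.rpow_one y).symm
          _ ≤ y ^ (a * (k:ℝ) + a * k) :=
              Real.rpow_le_rpow_of_exponent_le hy1.le (by linarith)
      have hTp := (hFmem p hp).2.1
      have hTp' := (hFmem p' hp').2.1
      have hmm : T * T ≤ (p:ℝ) * (p':ℝ) :=
        mul_le_mul hTp hTp' hT0.le (le_trans hT0.le hTp)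
      linarith
    have hqy : (q:ℝ) ≤ y := by
      have := h1.2.1
      calc (q:ℝ) ≤ ((⌊y⌋₊ : ℕ) : ℝ) := by exact_mod_cast this
        _ ≤ y := Nat.floor_le hy0.le
    have hlt : (p:ℝ) * (p':ℝ) ≤ (q:ℝ) - 1 := by
      have hc : ((p * p' : ℕ) : ℝ) ≤ ((q - 1 : ℕ) : ℝ) := by exact_mod_cast hle
      rw [Nat.cast_sub (by have := h1.2.2.2; omega)] at hc
      push_cast at hc
      linarith
    linarith
  -- counting
  have hBsub : F.biUnion G ⊆ A := Finset.biUnion_subset.mpr hGsub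
  have hcardB : (F.biUnion G).card = ∑ p ∈ F, (G p).card := Finset.card_biUnion hdisj
  have hGcard : ∀ p ∈ F, (G p).card = ((Qfun ⌊y⌋₊ p).card).choose k := by
    intro p hp
    rw [hGdef]
    simp only []
    rw [Finset.card_image_of_injOn, Finset.card_powersetCard]
    intro S hS S' hS' hprod
    simp only [Finset.mem_coe, Finset.mem_powersetCard] at hS hS'
    exact aux_prod_inj
      (fun q hq => (Qfun_facts (hS.1 hq)).1)
      (fun q hq => (Qfun_facts (hS'.1 hq)).1) hprod
  have hchoose : ∀ p ∈ F, (M / 2) ^ k / (Nat.factorial k : ℝ) ≤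
      ((((Qfun ⌊y⌋₊ p).card).choose k : ℕ) : ℝ) := by
    intro p hp
    obtain ⟨_, _, _, hMQ⟩ := hFmem p hp
    set m := (Qfun ⌊y⌋₊ p).card with hm
    have hkm : (k:ℝ) < m := by linarith
    have hkm' : k < m := by exact_mod_cast hkm
    have hM0 : 0 ≤ M := by linarith
    have key : M / 2 ≤ ((m + 1 - k : ℕ) : ℝ) := by
      rw [Nat.cast_sub (by omega)]
      push_cast
      linarith
    calc (M / 2) ^ k / (Nat.factorial k : ℝ)
        ≤ ((m + 1 - k : ℕ) : ℝ) ^ k / (Nat.factorial k : ℝ) := by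
          gcongr
      _ ≤ (m.choose k : ℝ) := Nat.pow_le_choose k m
  have hfact0 : (0:ℝ) < (Nat.factorial k : ℝ) := by exact_mod_cast Nat.factorial_pos k
  have hM0 : 0 ≤ M := by linarith
  have hsum : (T / Real.log y) * ((M / 2) ^ k / (Nat.factorial k : ℝ)) ≤ (A.card : ℝ) := by
    have h1 : ((F.biUnion G).card : ℝ) ≤ (A.card : ℝ) := by
      exact_mod_cast Finset.card_le_card hBsub
    have h2 : ((F.biUnion G).card : ℝ) = ∑ p ∈ F, ((((Qfun ⌊y⌋₊ p).card).choose k : ℕ) : ℝ) := by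
      rw [hcardB]
      push_cast
      exact Finset.sum_congr rfl (fun p hp => by rw [hGcard p hp])
    have h3 : (F.card : ℝ) * ((M / 2) ^ k / (Nat.factorial k : ℝ)) ≤
        ∑ p ∈ F, ((((Qfun ⌊y⌋₊ p).card).choose k : ℕ) : ℝ) := by
      have h := Finset.card_nsmul_le_sum F
        (fun p => ((((Qfun ⌊y⌋₊ p).card).choose k : ℕ) : ℝ))
        ((M / 2) ^ k / (Nat.factorial k : ℝ)) hchoose
      rwa [nsmul_eq_mul] at h
    have h4 : (T / Real.log y) * ((M / 2) ^ k / (Nat.factorial k : ℝ)) ≤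
        (F.card : ℝ) * ((M / 2) ^ k / (Nat.factorial k : ℝ)) := by
      apply mul_le_mul_of_nonneg_right hypF
      positivity
    linarith
  -- final algebra
  have hM2 : M / 2 = C * y / (4 * T * Real.log y) := by rw [hMdef]; ring
  have hTk : T ^ k = x ^ (a * ((k:ℝ) - 1)) * x ^ a := by
    rw [hTxa, ← Real.rpow_natCast (x ^ a) k, ← Real.rpow_mul hx0.le, ← Real.rpow_add hx0]
    congr 1
    ring
  have hx1a : x ^ (1 - a * ((k:ℝ) - 1)) = x / x ^ (a * ((k:ℝ) - 1)) := by
    rw [Real.rpow_sub hx0, Real.rpow_one]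
  have hP0 : (0:ℝ) < x ^ (a * ((k:ℝ) - 1)) := Real.rpow_pos_of_pos hx0 _
  have hA0 : (0:ℝ) < x ^ a := Real.rpow_pos_of_pos hx0 _
  have key : (T / Real.log y) * ((M / 2) ^ k / (Nat.factorial k : ℝ)) =
      c * x ^ (1 - a * ((k:ℝ) - 1)) / (Real.log x) ^ (k + 1) := by
    have hlxne : Real.log x ≠ 0 := hlogx.ne'
    have hkne : (k:ℝ) ≠ 0 := hk0.ne'
    have hfne : (Nat.factorial k : ℝ) ≠ 0 := hfact0.ne'
    have hPne : x ^ (a * ((k:ℝ) - 1)) ≠ 0 := hP0.ne'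
    have hAne : x ^ a ≠ 0 := hA0.ne'
    rw [hM2, hlogyx, hx1a, hcdef]
    simp only [div_pow, mul_pow]
    rw [hyk, hTk, hTxa]
    field_simp
    ring
  rw [← key]
  exact hsum
end
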